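/- arXiv:2311.13826 — 12 statements merged into one kernel-verified Lean document; each statement's English description precedes it below -/
import Mathlib

section
/- Let (D, ⊣, ⊢) be a dialgebra over a field K of characteristic zero, and define μ₂(x,y) := (1/2)(x ⊣ y + x ⊢ y) and μ₃(x,y,z) := (1/4)((x ⊣ y) ⊢ z − x ⊣ (y ⊢ z)). Then for all x, y, z, w ∈ D: μ₃(μ₂(x,y), z, w) − μ₃(x, μ₂(y,z), w) + μ₃(x, y, μ₂(z,w)) = μ₂(μ₃(x,y,z), w) + μ₂(x, μ₃(y,z,w)). -/
/-- For a dialgebra `(D, ⊣, ⊢)` over a field `K` of characteristic zero,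
with `μ₂(x,y) := (1/2)(x ⊣ y + x ⊢ y)` and
`μ₃(x,y,z) := (1/4)((x ⊣ y) ⊢ z − x ⊣ (y ⊢ z))`, the pentagon identity
`μ₃(μ₂(x,y),z,w) − μ₃(x,μ₂(y,z),w) + μ₃(x,y,μ₂(z,w))
  = μ₂(μ₃(x,y,z),w) + μ₂(x,μ₃(y,z,w))` holds.
Here `l x y = x ⊣ y`, `r x y = x ⊢ y`. -/
theorem dialgebra_pentagon_identity
    {K : Type*} [Field K] [CharZero K]
    {D : Type*} [AddCommGroup D] [Module K D]
    (l r : D →ₗ[K] D →ₗ[K] D)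
    (ax1 : ∀ x y z : D, l (l x y) z = l x (r y z))
    (ax2 : ∀ x y z : D, l (l x y) z = l x (l y z))
    (ax3 : ∀ x y z : D, l (r x y) z = r x (l y z))
    (ax4 : ∀ x y z : D, r (l x y) z = r x (r y z))
    (ax5 : ∀ x y z : D, r (r x y) z = r x (r y z))
    (μ₂ : D → D → D)
    (hμ₂ : ∀ x y : D, μ₂ x y = (2 : K)⁻¹ • (l x y + r x y))
    (μ₃ : D → D → D → D)
    (hμ₃ : ∀ x y z : D, μ₃ x y z = (4 : K)⁻¹ • (r (l x y) z - l x (r y z))) :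
    ∀ x y z w : D,
      μ₃ (μ₂ x y) z w - μ₃ x (μ₂ y z) w + μ₃ x y (μ₂ z w) =
        μ₂ (μ₃ x y z) w + μ₂ x (μ₃ y z w) := by
  intro x y z w
  simp only [hμ₂, hμ₃, map_add, map_sub, map_smul, LinearMap.add_apply,
    LinearMap.sub_apply, LinearMap.smul_apply, smul_add, smul_sub, smul_smul,
    ax2, ax3, ax4, ax5, ax1]
  module
end

section
/- Let (D, ⊣, ⊢) be a dialgebra over a field K of characteristic zero and define [x,y] := x ⊣ y − y ⊢ x. Then for all x, y, z ∈ D the following five compatibility relations hold: (i) [x, y ⊣ z] = y ⊢ [x,z] + [x,y] ⊣ z = [x, y ⊢ z]; (ii) [x ⊣ y, z] = x ⊣ [y,z] + [x,z] ⊣ y; (iii) [x ⊢ y, z] = x ⊢ [y,z] + [x,z] ⊢ y; (iv) [x,y] ⊢ z = −[y,x] ⊢ z; (v) x ⊣ [y,z] = −x ⊣ [z,y]. Hence (D, ⊣, ⊢, [−,−]) is a Poisson dialgebra. -/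
/-- For a dialgebra `(D, ⊣, ⊢)` over a field `K` of characteristic zero,
the bracket `[x,y] := x ⊣ y − y ⊢ x` satisfies the right Leibniz identity and the five
compatibility relations (i)–(v), so `(D, ⊣, ⊢, [−,−])` is a Poisson dialgebra.
Here `l x y = x ⊣ y`, `r x y = x ⊢ y`, `b x y = [x,y]`. -/
theorem dialgebra_gives_poisson_dialgebra
    {K : Type*} [Field K] [CharZero K]
    {D : Type*} [AddCommGroup D] [Module K D]
    (l r : D →ₗ[K] D →ₗ[K] D)
    (ax1 : ∀ x y z : D, l (l x y) z = l x (r y z))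
    (ax2 : ∀ x y z : D, l (l x y) z = l x (l y z))
    (ax3 : ∀ x y z : D, l (r x y) z = r x (l y z))
    (ax4 : ∀ x y z : D, r (l x y) z = r x (r y z))
    (ax5 : ∀ x y z : D, r (r x y) z = r x (r y z))
    (b : D → D → D)
    (hb : ∀ x y : D, b x y = l x y - r y x) :
    (∀ x y z : D, b (b x y) z = b (b x z) y + b x (b y z)) ∧
    (∀ x y z : D, b x (l y z) = r y (b x z) + l (b x y) z) ∧
    (∀ x y z : D, b x (r y z) = r y (b x z) + l (b x y) z) ∧
    (∀ x y z : D, b (l x y) z = l x (b y z) + l (b x z) y) ∧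
    (∀ x y z : D, b (r x y) z = r x (b y z) + r (b x z) y) ∧
    (∀ x y z : D, r (b x y) z = - r (b y x) z) ∧
    (∀ x y z : D, l x (b y z) = - l x (b z y)) := by
  have ax6 : ∀ x y z : D, l x (r y z) = l x (l y z) := by
    intro x y z; rw [← ax1, ax2]
  refine ⟨?_, ?_, ?_, ?_, ?_, ?_, ?_⟩ <;> intro x y z <;>
    simp only [hb, map_sub, LinearMap.sub_apply, ax2, ax3, ax4, ax5, ax6] <;> abel
end

section
/- Let P be a Poisson algebra over a field K of characteristic zero, M a Poisson bimodule over P, and f : M → P a Poisson-bimodule map (i.e., f(p·m) = p f(m), f(m·p) = f(m) p, and f([p,m]) = [p, f(m)] for all p ∈ P, m ∈ M). Then M, equipped with the products m ⊣ n := m · f(n), m ⊢ n := f(m) · n, and the bracket [m,n]_M := [m, f(n)], is a Poisson dialgebra. -/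
/-- Let `P` be a Poisson algebra over a field `K` of characteristic zero
(with K-bilinear associative product `mul` and Lie bracket `br`), `M` a Poisson
bimodule over `P` (with associative bimodule actions `actL`, `actR` and Lie action
`lb p m = [p, m]`, the opposite action being `[m, p] = −[p, m]`), and `f : M → P` a
Poisson-bimodule map. Then `M` with `m ⊣ n := m · f(n)`, `m ⊢ n := f(m) · n` and
`[m,n]_M := [m, f(n)] = −lb (f n) m` is a Poisson dialgebra.
Here `dl m n = m ⊣ n`, `dr m n = m ⊢ n`, `bM m n = [m,n]_M`. -/
theorem poisson_bimodule_map_gives_poisson_dialgebra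
    {K : Type*} [Field K] [CharZero K]
    {P : Type*} [AddCommGroup P] [Module K P]
    {M : Type*} [AddCommGroup M] [Module K M]
    (mul : P →ₗ[K] P →ₗ[K] P)
    (hassoc : ∀ x y z : P, mul (mul x y) z = mul x (mul y z))
    (br : P →ₗ[K] P →ₗ[K] P)
    (halt : ∀ x : P, br x x = 0)
    (hjac : ∀ x y z : P, br (br x y) z + br (br y z) x + br (br z x) y = 0)
    (hpois : ∀ x y z : P, br x (mul y z) = mul y (br x z) + mul (br x y) z)
    (actL : P →ₗ[K] M →ₗ[K] M) (actR : M →ₗ[K] P →ₗ[K] M)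
    (hLL : ∀ (p q : P) (m : M), actL (mul p q) m = actL p (actL q m))
    (hRR : ∀ (m : M) (p q : P), actR m (mul p q) = actR (actR m p) q)
    (hLR : ∀ (p : P) (m : M) (q : P), actR (actL p m) q = actL p (actR m q))
    (lb : P →ₗ[K] M →ₗ[K] M)
    (hlie : ∀ (p q : P) (m : M), lb (br p q) m = lb p (lb q m) - lb q (lb p m))
    (hc1 : ∀ (p q : P) (m : M), lb p (actL q m) = actL q (lb p m) + actL (br p q) m)
    (hc2 : ∀ (p : P) (m : M) (q : P), lb p (actR m q) = actR (lb p m) q + actR m (br p q))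
    (hc3 : ∀ (p q : P) (m : M), lb (mul p q) m = actL p (lb q m) + actR (lb p m) q)
    (f : M →ₗ[K] P)
    (hfL : ∀ (p : P) (m : M), f (actL p m) = mul p (f m))
    (hfR : ∀ (m : M) (p : P), f (actR m p) = mul (f m) p)
    (hfb : ∀ (p : P) (m : M), f (lb p m) = br p (f m))
    (dl dr bM : M → M → M)
    (hdl : ∀ m n : M, dl m n = actR m (f n))
    (hdr : ∀ m n : M, dr m n = actL (f m) n)
    (hbM : ∀ m n : M, bM m n = - lb (f n) m) :
    (∀ x y z : M, dl (dl x y) z = dl x (dr y z)) ∧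
    (∀ x y z : M, dl (dl x y) z = dl x (dl y z)) ∧
    (∀ x y z : M, dl (dr x y) z = dr x (dl y z)) ∧
    (∀ x y z : M, dr (dl x y) z = dr x (dr y z)) ∧
    (∀ x y z : M, dr (dr x y) z = dr x (dr y z)) ∧
    (∀ x y z : M, bM (bM x y) z = bM (bM x z) y + bM x (bM y z)) ∧
    (∀ x y z : M, bM x (dl y z) = dr y (bM x z) + dl (bM x y) z) ∧
    (∀ x y z : M, bM x (dr y z) = dr y (bM x z) + dl (bM x y) z) ∧
    (∀ x y z : M, bM (dl x y) z = dl x (bM y z) + dl (bM x z) y) ∧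
    (∀ x y z : M, bM (dr x y) z = dr x (bM y z) + dr (bM x z) y) ∧
    (∀ x y z : M, dr (bM x y) z = - dr (bM y x) z) ∧
    (∀ x y z : M, dl x (bM y z) = - dl x (bM z y)) := by
  have hanti : ∀ p q : P, br p q = - br q p := by
    intro p q
    have h := halt (p + q)
    simp only [map_add, LinearMap.add_apply, halt] at h
    rw [eq_neg_iff_add_eq_zero, add_comm]
    simpa using h
  refine ⟨?_, ?_, ?_, ?_, ?_, ?_, ?_, ?_, ?_, ?_, ?_, ?_⟩
  · intro x y z
    simp [hdl, hdr, hfL, hfR, hRR]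
  · intro x y z
    simp [hdl, hfR, hRR]
  · intro x y z
    simp [hdl, hdr, hLR]
  · intro x y z
    simp [hdl, hdr, hfR, hLL]
  · intro x y z
    simp [hdr, hfL, hLL]
  · intro x y z
    simp only [hbM, map_neg, LinearMap.neg_apply, hfb, neg_neg, hlie,
      LinearMap.sub_apply, map_sub]
    abel
  · intro x y z
    simp only [hbM, hdl, hdr, hfR, hc3, map_neg, LinearMap.neg_apply, neg_add]
  · intro x y z
    simp only [hbM, hdl, hdr, hfL, hc3, map_neg, LinearMap.neg_apply, neg_add]
  · intro x y z
    simp only [hbM, hdl, hc2, map_neg, LinearMap.neg_apply, hfb, neg_add]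
    abel
  · intro x y z
    simp only [hbM, hdr, hc1, map_neg, LinearMap.neg_apply, hfb, neg_add]
  · intro x y z
    simp only [hbM, hdr, map_neg, LinearMap.neg_apply, hfb, neg_neg]
    rw [hanti (f y) (f x)]
    simp
  · intro x y z
    simp only [hbM, hdl, map_neg, LinearMap.neg_apply, hfb, neg_neg]
    rw [hanti (f z) (f y)]
    simp
end

section
/- Let (P, d) be a differential Poisson algebra over a field K of characteristic zero, i.e., P is a Poisson algebra and d : P → P is a K-linear map with d(xy) = d(x)y + x d(y), d([x,y]) = [d(x), y] + [x, d(y)], and d ∘ d = 0. Then P, equipped with the products x ⊣ y := x d(y), x ⊢ y := d(x) y, and the bracket [x,y]_d := [x, d(y)], is a Poisson dialgebra. -/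
/-- Let `(P, d)` be a differential Poisson algebra over a field `K` of
characteristic zero: `P` a Poisson algebra (K-bilinear associative product `mul`, Lie
bracket `br`, Leibniz compatibility) and `d` a K-linear map which is a derivation of
both products with `d ∘ d = 0`. Then `x ⊣ y := x d(y)`, `x ⊢ y := d(x) y` and
`[x,y]_d := [x, d(y)]` make `P` a Poisson dialgebra.
Here `dl x y = x ⊣ y`, `dr x y = x ⊢ y`, `bd x y = [x,y]_d`. -/
theorem differential_poisson_algebra_gives_poisson_dialgebra
    {K : Type*} [Field K] [CharZero K]
    {P : Type*} [AddCommGroup P] [Module K P]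
    (mul : P →ₗ[K] P →ₗ[K] P)
    (hassoc : ∀ x y z : P, mul (mul x y) z = mul x (mul y z))
    (br : P →ₗ[K] P →ₗ[K] P)
    (halt : ∀ x : P, br x x = 0)
    (hjac : ∀ x y z : P, br (br x y) z + br (br y z) x + br (br z x) y = 0)
    (hpois : ∀ x y z : P, br x (mul y z) = mul y (br x z) + mul (br x y) z)
    (d : P →ₗ[K] P)
    (hdmul : ∀ x y : P, d (mul x y) = mul (d x) y + mul x (d y))
    (hdbr : ∀ x y : P, d (br x y) = br (d x) y + br x (d y))
    (hd2 : ∀ x : P, d (d x) = 0)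
    (dl dr bd : P → P → P)
    (hdl : ∀ x y : P, dl x y = mul x (d y))
    (hdr : ∀ x y : P, dr x y = mul (d x) y)
    (hbd : ∀ x y : P, bd x y = br x (d y)) :
    (∀ x y z : P, dl (dl x y) z = dl x (dr y z)) ∧
    (∀ x y z : P, dl (dl x y) z = dl x (dl y z)) ∧
    (∀ x y z : P, dl (dr x y) z = dr x (dl y z)) ∧
    (∀ x y z : P, dr (dl x y) z = dr x (dr y z)) ∧
    (∀ x y z : P, dr (dr x y) z = dr x (dr y z)) ∧
    (∀ x y z : P, bd (bd x y) z = bd (bd x z) y + bd x (bd y z)) ∧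
    (∀ x y z : P, bd x (dl y z) = dr y (bd x z) + dl (bd x y) z) ∧
    (∀ x y z : P, bd x (dr y z) = dr y (bd x z) + dl (bd x y) z) ∧
    (∀ x y z : P, bd (dl x y) z = dl x (bd y z) + dl (bd x z) y) ∧
    (∀ x y z : P, bd (dr x y) z = dr x (bd y z) + dr (bd x z) y) ∧
    (∀ x y z : P, dr (bd x y) z = - dr (bd y x) z) ∧
    (∀ x y z : P, dl x (bd y z) = - dl x (bd z y)) := by
  have hanti : ∀ a b : P, br a b = - br b a := by
    intro a b
    have h := halt (a + b)
    simp only [map_add, LinearMap.add_apply, halt, zero_add, add_zero] at h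
    rw [eq_neg_iff_add_eq_zero, add_comm]; exact h
  have hleib : ∀ a b c : P, br (br a b) c = br (br a c) b + br a (br b c) := by
    intro a b c
    have h := hjac a b c
    have h2 : br (br b c) a = - br a (br b c) := hanti _ _
    have h3 : br (br c a) b = - br (br a c) b := by rw [hanti c a, map_neg, LinearMap.neg_apply]
    rw [h2, h3] at h
    linear_combination (norm := abel) h
  refine ⟨?_, ?_, ?_, ?_, ?_, ?_, ?_, ?_, ?_, ?_, ?_, ?_⟩
  · intro x y z; simp only [hdl, hdr, hbd, hdmul, hdbr, hd2, map_zero, LinearMap.zero_apply,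
      zero_add, add_zero, map_add, LinearMap.add_apply, map_neg, LinearMap.neg_apply]
    try rw [hassoc]
  · intro x y z; simp only [hdl, hdr, hbd, hdmul, hdbr, hd2, map_zero, LinearMap.zero_apply,
      zero_add, add_zero, map_add, LinearMap.add_apply, map_neg, LinearMap.neg_apply]
    try rw [hassoc]
  · intro x y z; simp only [hdl, hdr, hbd, hdmul, hdbr, hd2, map_zero, LinearMap.zero_apply,
      zero_add, add_zero, map_add, LinearMap.add_apply, map_neg, LinearMap.neg_apply]
    try rw [hassoc]
  · intro x y z; simp only [hdl, hdr, hbd, hdmul, hdbr, hd2, map_zero, LinearMap.zero_apply,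
      zero_add, add_zero, map_add, LinearMap.add_apply, map_neg, LinearMap.neg_apply]
    try rw [hassoc]
  · intro x y z; simp only [hdl, hdr, hbd, hdmul, hdbr, hd2, map_zero, LinearMap.zero_apply,
      zero_add, add_zero, map_add, LinearMap.add_apply, map_neg, LinearMap.neg_apply]
    try rw [hassoc]
  · intro x y z; simp only [hdl, hdr, hbd, hdmul, hdbr, hd2, map_zero, LinearMap.zero_apply,
      zero_add, add_zero, map_add, LinearMap.add_apply, map_neg, LinearMap.neg_apply]
    exact hleib x (d y) (d z)
  · intro x y z; simp only [hdl, hdr, hbd, hdmul, hdbr, hd2, map_zero, LinearMap.zero_apply,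
      zero_add, add_zero, map_add, LinearMap.add_apply, map_neg, LinearMap.neg_apply]
    try rw [hpois]
    try abel
  · intro x y z; simp only [hdl, hdr, hbd, hdmul, hdbr, hd2, map_zero, LinearMap.zero_apply,
      zero_add, add_zero, map_add, LinearMap.add_apply, map_neg, LinearMap.neg_apply]
    try rw [hpois]
    try abel
  · intro x y z; simp only [hdl, hdr, hbd, hdmul, hdbr, hd2, map_zero, LinearMap.zero_apply,
      zero_add, add_zero, map_add, LinearMap.add_apply, map_neg, LinearMap.neg_apply]
    rw [hanti (mul x (d y)) (d z), hpois]
    rw [hanti (d z) (d y), hanti (d z) x]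
    simp only [map_neg, LinearMap.neg_apply, neg_add, neg_neg]
    try abel
  · intro x y z; simp only [hdl, hdr, hbd, hdmul, hdbr, hd2, map_zero, LinearMap.zero_apply,
      zero_add, add_zero, map_add, LinearMap.add_apply, map_neg, LinearMap.neg_apply]
    rw [hanti (mul (d x) y) (d z), hpois]
    rw [hanti (d z) y, hanti (d z) (d x)]
    simp only [map_neg, LinearMap.neg_apply, neg_add, neg_neg]
    try abel
  · intro x y z; simp only [hdl, hdr, hbd, hdmul, hdbr, hd2, map_zero, LinearMap.zero_apply,
      zero_add, add_zero, map_add, LinearMap.add_apply, map_neg, LinearMap.neg_apply]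
    try (rw [hanti (d x) (d y)]; simp)
  · intro x y z; simp only [hdl, hdr, hbd, hdmul, hdbr, hd2, map_zero, LinearMap.zero_apply,
      zero_add, add_zero, map_add, LinearMap.add_apply, map_neg, LinearMap.neg_apply]
    try (rw [hanti (d y) (d z)]; simp)
end

section
/- Let P be a Poisson algebra over a field K of characteristic zero and let α : P → P be an averaging operator, i.e., a K-linear map satisfying α(x α(y)) = α(x) α(y) = α(α(x) y) and [α(x), α(y)] = α([α(x), y]) for all x, y ∈ P. Then P, equipped with the products x ⊣ y := x α(y), x ⊢ y := α(x) y, and the bracket [x,y]_P := [x, α(y)], is a Poisson dialgebra. -/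
/-- Let `P` be a Poisson algebra over a field `K` of characteristic zero
(K-bilinear associative product `mul`, Lie bracket `br`, Leibniz compatibility) and let
`α : P → P` be an averaging operator, i.e. `α(x α(y)) = α(x) α(y) = α(α(x) y)` and
`[α(x), α(y)] = α([α(x), y])`. Then `x ⊣ y := x α(y)`, `x ⊢ y := α(x) y` and
`[x,y]_P := [x, α(y)]` make `P` a Poisson dialgebra.
Here `dl x y = x ⊣ y`, `dr x y = x ⊢ y`, `bα x y = [x,y]_P`. -/
theorem averaging_operator_gives_poisson_dialgebra
    {K : Type*} [Field K] [CharZero K]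
    {P : Type*} [AddCommGroup P] [Module K P]
    (mul : P →ₗ[K] P →ₗ[K] P)
    (hassoc : ∀ x y z : P, mul (mul x y) z = mul x (mul y z))
    (br : P →ₗ[K] P →ₗ[K] P)
    (halt : ∀ x : P, br x x = 0)
    (hjac : ∀ x y z : P, br (br x y) z + br (br y z) x + br (br z x) y = 0)
    (hpois : ∀ x y z : P, br x (mul y z) = mul y (br x z) + mul (br x y) z)
    (α : P →ₗ[K] P)
    (havg1 : ∀ x y : P, α (mul x (α y)) = mul (α x) (α y))
    (havg2 : ∀ x y : P, α (mul (α x) y) = mul (α x) (α y))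
    (havg3 : ∀ x y : P, br (α x) (α y) = α (br (α x) y))
    (dl dr bα : P → P → P)
    (hdl : ∀ x y : P, dl x y = mul x (α y))
    (hdr : ∀ x y : P, dr x y = mul (α x) y)
    (hbα : ∀ x y : P, bα x y = br x (α y)) :
    (∀ x y z : P, dl (dl x y) z = dl x (dr y z)) ∧
    (∀ x y z : P, dl (dl x y) z = dl x (dl y z)) ∧
    (∀ x y z : P, dl (dr x y) z = dr x (dl y z)) ∧
    (∀ x y z : P, dr (dl x y) z = dr x (dr y z)) ∧
    (∀ x y z : P, dr (dr x y) z = dr x (dr y z)) ∧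
    (∀ x y z : P, bα (bα x y) z = bα (bα x z) y + bα x (bα y z)) ∧
    (∀ x y z : P, bα x (dl y z) = dr y (bα x z) + dl (bα x y) z) ∧
    (∀ x y z : P, bα x (dr y z) = dr y (bα x z) + dl (bα x y) z) ∧
    (∀ x y z : P, bα (dl x y) z = dl x (bα y z) + dl (bα x z) y) ∧
    (∀ x y z : P, bα (dr x y) z = dr x (bα y z) + dr (bα x z) y) ∧
    (∀ x y z : P, dr (bα x y) z = - dr (bα y x) z) ∧
    (∀ x y z : P, dl x (bα y z) = - dl x (bα z y)) := by
  have hskew : ∀ x y : P, br x y = - br y x := by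
    intro x y
    have h := halt (x + y)
    simp only [map_add, LinearMap.add_apply, halt, zero_add, add_zero] at h
    exact eq_neg_of_add_eq_zero_right h
  have key : ∀ x y : P, α (br x (α y)) = br (α x) (α y) := by
    intro x y
    rw [hskew x (α y), map_neg, ← havg3, hskew (α y) (α x), neg_neg]
  have hleib : ∀ x y z : P, br (br x y) z = br (br x z) y + br x (br y z) := by
    intro x y z
    have h := hjac x y z
    have h2 : br (br x y) z = -(br (br y z) x + br (br z x) y) := by
      rw [eq_neg_iff_add_eq_zero, ← add_assoc]; exact h
    rw [h2, hskew (br y z) x, hskew z x, map_neg, LinearMap.neg_apply]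
    abel
  refine ⟨?_, ?_, ?_, ?_, ?_, ?_, ?_, ?_, ?_, ?_, ?_, ?_⟩
  · intro x y z
    simp only [hdl, hdr]
    rw [havg2, hassoc]
  · intro x y z
    simp only [hdl]
    rw [havg1, hassoc]
  · intro x y z
    simp only [hdl, hdr]
    rw [hassoc]
  · intro x y z
    simp only [hdl, hdr]
    rw [havg1, hassoc]
  · intro x y z
    simp only [hdr]
    rw [havg2, hassoc]
  · intro x y z
    simp only [hbα]
    rw [key, hleib]
  · intro x y z
    simp only [hbα, hdl, hdr]
    rw [havg1, hpois]
  · intro x y z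
    simp only [hbα, hdl, hdr]
    rw [havg2, hpois]
  · intro x y z
    simp only [hbα, hdl]
    rw [key, hskew (mul x (α y)) (α z), hpois, hskew (α z) (α y), hskew (α z) x]
    simp only [map_neg, LinearMap.neg_apply, neg_neg]
    abel
  · intro x y z
    simp only [hbα, hdr]
    rw [key, hskew (mul (α x) y) (α z), hpois, hskew (α z) y, hskew (α z) (α x)]
    simp only [map_neg, LinearMap.neg_apply, neg_neg]
    abel
  · intro x y z
    simp only [hbα, hdr]
    rw [key, key, hskew (α x) (α y), map_neg, LinearMap.neg_apply]
  · intro x y z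
    simp only [hbα, hdl]
    rw [key, key, hskew (α y) (α z), map_neg]
end

section
/- Let (D, ⊣, ⊢) be a dialgebra over a field K of characteristic zero and let (D_n)_{n ≥ 0} be an increasing chain of subspaces of D (with D_{-1} := {0}) such that D = ⋃_{n≥0} D_n and D_i ⊣ D_j ⊆ D_{i+j}, D_i ⊢ D_j ⊆ D_{i+j} for all i, j ≥ 0. For integers p, q define the bracket [u,v]^{p,q} := u ⊣ v − (−1)^{pq} v ⊢ u. Then for all x ∈ D_i, y ∈ D_j, z ∈ D_k: [[x,y]^{i,j}, z]^{i+j,k} − (−1)^{jk} [[x,z]^{i,k}, y]^{i+k,j} − [x, [y,z]^{j,k}]^{i,j+k} ∈ D_{i+j+k−1}. In other words, the induced degree-0 bracket on the associated graded space Gr(D) satisfies the graded (right) Leibniz identity. -/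
/-- Let `(D, ⊣, ⊢)` be a dialgebra over a field `K` of characteristic
zero with an increasing filtration `(F n)` of subspaces (indexed by `ℤ`, with
`F n = 0` for `n < 0`, corresponding to `D_{-1} = {0}`), whose union is `D` and which
is multiplicative: `F i ⊣ F j ⊆ F (i+j)` and `F i ⊢ F j ⊆ F (i+j)`. For integers
`p, q` define `[u,v]^{p,q} := u ⊣ v − (−1)^{pq} v ⊢ u`. Then for `x ∈ F i`, `y ∈ F j`,
`z ∈ F k`, the graded Leibniz defect
`[[x,y]^{i,j}, z]^{i+j,k} − (−1)^{jk} [[x,z]^{i,k}, y]^{i+k,j} − [x, [y,z]^{j,k}]^{i,j+k}`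
lies in `F (i+j+k−1)`; i.e. the induced degree-0 bracket on `Gr(D)` satisfies the
graded right Leibniz identity. Here `l x y = x ⊣ y`, `r x y = x ⊢ y`. -/
theorem filtered_dialgebra_graded_leibniz
    {K : Type*} [Field K] [CharZero K]
    {D : Type*} [AddCommGroup D] [Module K D]
    (l r : D →ₗ[K] D →ₗ[K] D)
    (ax1 : ∀ x y z : D, l (l x y) z = l x (r y z))
    (ax2 : ∀ x y z : D, l (l x y) z = l x (l y z))
    (ax3 : ∀ x y z : D, l (r x y) z = r x (l y z))
    (ax4 : ∀ x y z : D, r (l x y) z = r x (r y z))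
    (ax5 : ∀ x y z : D, r (r x y) z = r x (r y z))
    (F : ℤ → Submodule K D)
    (hneg : ∀ n : ℤ, n < 0 → F n = ⊥)
    (hmono : Monotone F)
    (hunion : ∀ x : D, ∃ n : ℤ, x ∈ F n)
    (hFl : ∀ (i j : ℤ) (x y : D), x ∈ F i → y ∈ F j → l x y ∈ F (i + j))
    (hFr : ∀ (i j : ℤ) (x y : D), x ∈ F i → y ∈ F j → r x y ∈ F (i + j))
    (br : ℤ → ℤ → D → D → D)
    (hbr : ∀ (p q : ℤ) (u v : D), br p q u v = l u v - ((-1 : K) ^ (p * q)) • r v u) :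
    ∀ (i j k : ℤ) (x y z : D), x ∈ F i → y ∈ F j → z ∈ F k →
      br (i + j) k (br i j x y) z
        - ((-1 : K) ^ (j * k)) • br (i + k) j (br i k x z) y
        - br i (j + k) x (br j k y z) ∈ F (i + j + k - 1) := by
  intro i j k x y z hx hy hz
  have h0 : br (i + j) k (br i j x y) z
        - ((-1 : K) ^ (j * k)) • br (i + k) j (br i k x z) y
        - br i (j + k) x (br j k y z) = 0 := by
    simp only [hbr, map_sub, map_smul, LinearMap.sub_apply, LinearMap.smul_apply,
      smul_sub, smul_smul]
    have hne : (-1 : K) ≠ 0 := by norm_num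
    have sq : ∀ n : ℤ, (-1 : K) ^ n * (-1 : K) ^ n = 1 := by
      intro n
      rw [← zpow_add₀ hne, show n + n = 2 * n by ring, zpow_mul]
      norm_num
    have sq2 : ∀ n : ℤ, ((-1 : K) ^ n) ^ 2 = 1 := by
      intro n; rw [pow_two]; exact sq n
    have e1 : (-1 : K) ^ ((i + j) * k) = (-1 : K) ^ (i * k) * (-1 : K) ^ (j * k) := by
      rw [← zpow_add₀ hne]; ring_nf
    have e2 : (-1 : K) ^ ((i + k) * j) = (-1 : K) ^ (i * j) * (-1 : K) ^ (j * k) := by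
      rw [← zpow_add₀ hne]; ring_nf
    have e3 : (-1 : K) ^ (i * (j + k)) = (-1 : K) ^ (i * j) * (-1 : K) ^ (i * k) := by
      rw [← zpow_add₀ hne]; ring_nf
    rw [ax2 x y z, ax3 y x z, ← ax3 z x y, ← ax5 z y x, ax1 x z y, ← ax4 y z x,
      e1, e2, e3]
    match_scalars <;> try ring
    · linear_combination ((-1 : K) ^ (i * j)) * sq2 (j * k)
    · linear_combination (-((-1 : K) ^ (j * i) * (-1 : K) ^ (k * i))) * sq2 (j * k)
  rw [h0]
  exact Submodule.zero_mem _
end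

section
/- Let (P, ⊣, ⊢, [−,−]) be a Poisson dialgebra over a field K of characteristic zero and define μ₃(x,y,z) := (1/4)((x ⊣ y) ⊢ z − x ⊣ (y ⊢ z)). Then [w, μ₃(x,y,z)] = 0 for all w, x, y, z ∈ P; i.e., μ₃ takes values in the right center Z(P) := {u ∈ P : [v,u] = 0 for all v ∈ P}. -/
/-- Let `(P, ⊣, ⊢, [−,−])` be a Poisson dialgebra over a field `K` of
characteristic zero and `μ₃(x,y,z) := (1/4)((x ⊣ y) ⊢ z − x ⊣ (y ⊢ z))`. Then
`[w, μ₃(x,y,z)] = 0` for all `w,x,y,z`, i.e. `μ₃` takes values in the right center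
`Z(P) := {u : [v,u] = 0 for all v}`.
Here `l x y = x ⊣ y`, `r x y = x ⊢ y`, `b x y = [x,y]`. -/
theorem mu3_lands_in_right_center
    {K : Type*} [Field K] [CharZero K]
    {P : Type*} [AddCommGroup P] [Module K P]
    (l r : P →ₗ[K] P →ₗ[K] P) (b : P →ₗ[K] P →ₗ[K] P)
    (dax1 : ∀ x y z : P, l (l x y) z = l x (r y z))
    (dax2 : ∀ x y z : P, l (l x y) z = l x (l y z))
    (dax3 : ∀ x y z : P, l (r x y) z = r x (l y z))
    (dax4 : ∀ x y z : P, r (l x y) z = r x (r y z))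
    (dax5 : ∀ x y z : P, r (r x y) z = r x (r y z))
    (leib : ∀ x y z : P, b (b x y) z = b (b x z) y + b x (b y z))
    (c1 : ∀ x y z : P, b x (l y z) = r y (b x z) + l (b x y) z)
    (c1mixed : ∀ x y z : P, b x (r y z) = r y (b x z) + l (b x y) z)
    (c2 : ∀ x y z : P, b (l x y) z = l x (b y z) + l (b x z) y)
    (c3 : ∀ x y z : P, b (r x y) z = r x (b y z) + r (b x z) y)
    (c4 : ∀ x y z : P, r (b x y) z = - r (b y x) z)
    (c5 : ∀ x y z : P, l x (b y z) = - l x (b z y))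
    (Z : Set P)
    (hZ : Z = {u : P | ∀ v : P, b v u = 0})
    (μ₃ : P → P → P → P)
    (hμ₃ : ∀ x y z : P, μ₃ x y z = (4 : K)⁻¹ • (r (l x y) z - l x (r y z))) :
    ∀ w x y z : P, b w (μ₃ x y z) = 0 ∧ μ₃ x y z ∈ Z := by
  have key : ∀ w x y z : P, b w (r (l x y) z - l x (r y z)) = 0 := by
    intro w x y z
    rw [map_sub, c1mixed w (l x y) z, c1 w x (r y z), c1 w x y, c1mixed w y z,
      map_add, LinearMap.add_apply, dax4, dax3, dax1]
    simp only [map_add]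
    abel
  intro w x y z
  have h : b w (μ₃ x y z) = 0 := by
    rw [hμ₃, map_smul, key, smul_zero]
  refine ⟨h, ?_⟩
  rw [hZ]
  intro v
  rw [hμ₃, map_smul, key, smul_zero]
end

section
/- Let (P, ⊣, ⊢, [−,−]) be a Poisson dialgebra over a field K of characteristic zero and let I := {u ∈ P : u ⊢ v = 0 and v ⊣ u = 0 for all v ∈ P}. If c ∈ I, then for all x, z ∈ P one has [c,x] ⊢ z = 0 and z ⊣ [c,x] = 0; i.e., [c,x] ∈ I. -/
/-- Let `(P, ⊣, ⊢, [−,−])` be a Poisson dialgebra over a field `K` of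
characteristic zero and `I := {u : u ⊢ v = 0 and v ⊣ u = 0 for all v}`. If `c ∈ I`,
then for all `x, z ∈ P` one has `[c,x] ⊢ z = 0` and `z ⊣ [c,x] = 0`, i.e.
`[c,x] ∈ I`. Here `l x y = x ⊣ y`, `r x y = x ⊢ y`, `b x y = [x,y]`. -/
theorem bracket_preserves_annihilator_ideal
    {K : Type*} [Field K] [CharZero K]
    {P : Type*} [AddCommGroup P] [Module K P]
    (l r : P →ₗ[K] P →ₗ[K] P) (b : P →ₗ[K] P →ₗ[K] P)
    (dax1 : ∀ x y z : P, l (l x y) z = l x (r y z))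
    (dax2 : ∀ x y z : P, l (l x y) z = l x (l y z))
    (dax3 : ∀ x y z : P, l (r x y) z = r x (l y z))
    (dax4 : ∀ x y z : P, r (l x y) z = r x (r y z))
    (dax5 : ∀ x y z : P, r (r x y) z = r x (r y z))
    (leib : ∀ x y z : P, b (b x y) z = b (b x z) y + b x (b y z))
    (c1 : ∀ x y z : P, b x (l y z) = r y (b x z) + l (b x y) z)
    (c1mixed : ∀ x y z : P, b x (r y z) = r y (b x z) + l (b x y) z)
    (c2 : ∀ x y z : P, b (l x y) z = l x (b y z) + l (b x z) y)
    (c3 : ∀ x y z : P, b (r x y) z = r x (b y z) + r (b x z) y)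
    (c4 : ∀ x y z : P, r (b x y) z = - r (b y x) z)
    (c5 : ∀ x y z : P, l x (b y z) = - l x (b z y))
    (I : Set P)
    (hI : I = {u : P | ∀ v : P, r u v = 0 ∧ l v u = 0}) :
    ∀ c ∈ I, ∀ x z : P, r (b c x) z = 0 ∧ l z (b c x) = 0 ∧ b c x ∈ I := by
  subst hI
  intro c hc
  have hr : ∀ v : P, r c v = 0 := fun v => (hc v).1
  have hl : ∀ v : P, l v c = 0 := fun v => (hc v).2
  have key_r : ∀ x z : P, r (b c x) z = 0 := by
    intro x z
    have h := c3 c z x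
    rw [hr z, hr (b z x)] at h
    simpa using h.symm
  have key_l : ∀ x z : P, l z (b c x) = 0 := by
    intro x z
    have h := c2 z c x
    rw [hl z, hl (b z x)] at h
    simpa using h.symm
  intro x z
  exact ⟨key_r x z, key_l x z, fun v => ⟨key_r x v, key_l x v⟩⟩
end

section
/- Let (P, ⊣, ⊢, [−,−]) be a Poisson dialgebra over a field K of characteristic zero. Then for all x, y, z, w ∈ P: ([[z,y],x] + [[x,z],y] + [[y,x],z]) ⊢ w = 0 and w ⊣ ([[z,y],x] + [[x,z],y] + [[y,x],z]) = 0. In particular the Jacobiator l₃(x,y,z) := (1/4)([[z,y],x] + [[x,z],y] + [[y,x],z]) takes values in the ideal I := {u ∈ P : u ⊢ v = 0 and v ⊣ u = 0 for all v ∈ P}. -/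
/-- Let `(P, ⊣, ⊢, [−,−])` be a Poisson dialgebra over a field `K` of
characteristic zero. Then `([[z,y],x] + [[x,z],y] + [[y,x],z]) ⊢ w = 0` and
`w ⊣ ([[z,y],x] + [[x,z],y] + [[y,x],z]) = 0` for all `x,y,z,w`; in particular the
Jacobiator `l₃(x,y,z) := (1/4)([[z,y],x] + [[x,z],y] + [[y,x],z])` takes values in
`I := {u : u ⊢ v = 0 and v ⊣ u = 0 for all v}`.
Here `l x y = x ⊣ y`, `r x y = x ⊢ y`, `b x y = [x,y]`. -/
theorem jacobiator_lands_in_annihilator_ideal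
    {K : Type*} [Field K] [CharZero K]
    {P : Type*} [AddCommGroup P] [Module K P]
    (l r : P →ₗ[K] P →ₗ[K] P) (b : P →ₗ[K] P →ₗ[K] P)
    (dax1 : ∀ x y z : P, l (l x y) z = l x (r y z))
    (dax2 : ∀ x y z : P, l (l x y) z = l x (l y z))
    (dax3 : ∀ x y z : P, l (r x y) z = r x (l y z))
    (dax4 : ∀ x y z : P, r (l x y) z = r x (r y z))
    (dax5 : ∀ x y z : P, r (r x y) z = r x (r y z))
    (leib : ∀ x y z : P, b (b x y) z = b (b x z) y + b x (b y z))
    (c1 : ∀ x y z : P, b x (l y z) = r y (b x z) + l (b x y) z)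
    (c1mixed : ∀ x y z : P, b x (r y z) = r y (b x z) + l (b x y) z)
    (c2 : ∀ x y z : P, b (l x y) z = l x (b y z) + l (b x z) y)
    (c3 : ∀ x y z : P, b (r x y) z = r x (b y z) + r (b x z) y)
    (c4 : ∀ x y z : P, r (b x y) z = - r (b y x) z)
    (c5 : ∀ x y z : P, l x (b y z) = - l x (b z y))
    (I : Set P)
    (hI : I = {u : P | ∀ v : P, r u v = 0 ∧ l v u = 0})
    (l₃ : P → P → P → P)
    (hl₃ : ∀ x y z : P,
      l₃ x y z = (4 : K)⁻¹ • (b (b z y) x + b (b x z) y + b (b y x) z)) :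
    ∀ x y z w : P,
      r (b (b z y) x + b (b x z) y + b (b y x) z) w = 0 ∧
      l w (b (b z y) x + b (b x z) y + b (b y x) z) = 0 ∧
      l₃ x y z ∈ I := by

  intro x y z w
  -- inner antisymmetry of the Leibniz bracket in the second argument
  have inner : ∀ a c d : P, b a (b c d) = - b a (b d c) := by
    intro a c d
    have h1 := leib a c d
    have h2 := leib a d c
    have h3 : b a (b c d) = b (b a c) d - b (b a d) c := by rw [h1]; abel
    rw [h3, h2]; abel
  have key : ∀ x y z : P, b (b z y) x + b (b x z) y + b (b y x) z
      = (b (b z x) y + b (b x z) y) + (b z (b y x) + b (b y x) z) := by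
    intro x y z
    rw [leib z y x]; abel
  have hr : ∀ x y z w : P, r (b (b z y) x + b (b x z) y + b (b y x) z) w = 0 := by
    intro x y z w
    rw [key]
    simp only [map_add, LinearMap.add_apply]
    rw [c4 (b z x) y w, c4 (b x z) y w, c4 (b y x) z w, inner y x z]
    simp only [map_neg, LinearMap.neg_apply]
    abel
  have hl : ∀ x y z w : P, l w (b (b z y) x + b (b x z) y + b (b y x) z) = 0 := by
    intro x y z w
    rw [key]
    simp only [map_add]
    rw [c5 w (b z x) y, c5 w (b x z) y, c5 w (b y x) z, inner y x z]
    simp only [map_neg]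
    abel
  refine ⟨hr x y z w, hl x y z w, ?_⟩
  rw [hI, hl₃]
  intro v
  constructor
  · rw [map_smul, LinearMap.smul_apply, hr x y z v, smul_zero]
  · rw [map_smul, hl x y z v, smul_zero]
end

section
/- Let (P, ⊣, ⊢, [−,−]) be a reduced Poisson dialgebra over a field K of characteristic zero, i.e., x ⊣ y = x ⊢ y for all x, y ∈ P, and write xy := x ⊣ y. Suppose the associative product is unital, i.e., there exists e ∈ P with ex = x = xe for all x ∈ P. Then the Leibniz bracket is skew-symmetric: [x,y] = −[y,x] for all x, y ∈ P (so P is a Poisson algebra). -/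
/-- Let `(P, ⊣, ⊢, [−,−])` be a reduced Poisson dialgebra over a field
`K` of characteristic zero (i.e. `x ⊣ y = x ⊢ y`; write `xy := x ⊣ y`). If the
associative product is unital, with unit `e`, then the Leibniz bracket is
skew-symmetric: `[x,y] = −[y,x]` for all `x,y` (so `P` is a Poisson algebra).
Here `l x y = x ⊣ y`, `r x y = x ⊢ y`, `b x y = [x,y]`. -/
theorem reduced_unital_poisson_dialgebra_is_skew
    {K : Type*} [Field K] [CharZero K]
    {P : Type*} [AddCommGroup P] [Module K P]
    (l r : P →ₗ[K] P →ₗ[K] P) (b : P →ₗ[K] P →ₗ[K] P)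
    (dax1 : ∀ x y z : P, l (l x y) z = l x (r y z))
    (dax2 : ∀ x y z : P, l (l x y) z = l x (l y z))
    (dax3 : ∀ x y z : P, l (r x y) z = r x (l y z))
    (dax4 : ∀ x y z : P, r (l x y) z = r x (r y z))
    (dax5 : ∀ x y z : P, r (r x y) z = r x (r y z))
    (leib : ∀ x y z : P, b (b x y) z = b (b x z) y + b x (b y z))
    (c1 : ∀ x y z : P, b x (l y z) = r y (b x z) + l (b x y) z)
    (c1mixed : ∀ x y z : P, b x (r y z) = r y (b x z) + l (b x y) z)
    (c2 : ∀ x y z : P, b (l x y) z = l x (b y z) + l (b x z) y)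
    (c3 : ∀ x y z : P, b (r x y) z = r x (b y z) + r (b x z) y)
    (c4 : ∀ x y z : P, r (b x y) z = - r (b y x) z)
    (c5 : ∀ x y z : P, l x (b y z) = - l x (b z y))
    (hred : ∀ x y : P, l x y = r x y)
    (e : P) (he : ∀ x : P, l e x = x ∧ l x e = x) :
    ∀ x y : P, b x y = - b y x := by
  intro x y
  have h := c4 x y e
  rw [← hred, ← hred, (he (b x y)).2, (he (b y x)).2] at h
  exact h
end

section
/- Let (P, ⊣, ⊢, [−,−]) be a reduced Poisson dialgebra over a field K of characteristic zero (i.e., x ⊣ y = x ⊢ y for all x, y; write xy := x ⊣ y) and define l₂(x,y) := (1/2)([x,y] − [y,x]). Then for each x ∈ P the map z ↦ l₂(x,z) is a derivation of the associative product: l₂(x, yz) = l₂(x,y) z + y l₂(x,z) for all y, z ∈ P. -/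
/-- Let `(P, ⊣, ⊢, [−,−])` be a reduced Poisson dialgebra over a field
`K` of characteristic zero (i.e. `x ⊣ y = x ⊢ y`; write `xy := x ⊣ y`) and define
`l₂(x,y) := (1/2)([x,y] − [y,x])`. Then for each `x` the map `z ↦ l₂(x,z)` is a
derivation of the associative product: `l₂(x, yz) = l₂(x,y) z + y l₂(x,z)`.
Here `l x y = x ⊣ y`, `r x y = x ⊢ y`, `b x y = [x,y]`. -/
theorem l2_is_derivation_of_reduced_product
    {K : Type*} [Field K] [CharZero K]
    {P : Type*} [AddCommGroup P] [Module K P]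
    (l r : P →ₗ[K] P →ₗ[K] P) (b : P →ₗ[K] P →ₗ[K] P)
    (dax1 : ∀ x y z : P, l (l x y) z = l x (r y z))
    (dax2 : ∀ x y z : P, l (l x y) z = l x (l y z))
    (dax3 : ∀ x y z : P, l (r x y) z = r x (l y z))
    (dax4 : ∀ x y z : P, r (l x y) z = r x (r y z))
    (dax5 : ∀ x y z : P, r (r x y) z = r x (r y z))
    (leib : ∀ x y z : P, b (b x y) z = b (b x z) y + b x (b y z))
    (c1 : ∀ x y z : P, b x (l y z) = r y (b x z) + l (b x y) z)
    (c1mixed : ∀ x y z : P, b x (r y z) = r y (b x z) + l (b x y) z)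
    (c2 : ∀ x y z : P, b (l x y) z = l x (b y z) + l (b x z) y)
    (c3 : ∀ x y z : P, b (r x y) z = r x (b y z) + r (b x z) y)
    (c4 : ∀ x y z : P, r (b x y) z = - r (b y x) z)
    (c5 : ∀ x y z : P, l x (b y z) = - l x (b z y))
    (hred : ∀ x y : P, l x y = r x y)
    (l₂ : P → P → P)
    (hl₂ : ∀ x y : P, l₂ x y = (2 : K)⁻¹ • (b x y - b y x)) :
    ∀ x y z : P, l₂ x (l y z) = l (l₂ x y) z + l y (l₂ x z) := by
  intro x y z
  simp only [hl₂, map_smul, map_sub, LinearMap.smul_apply, LinearMap.sub_apply,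
    hred, c1mixed x y z, c3 y z x]
  module
end

section
/- Let (P, ⊣, ⊢, [−,−]) be a reduced Poisson dialgebra over a field K of characteristic zero (i.e., x ⊣ y = x ⊢ y for all x, y; write xy := x ⊣ y) and define l₃(x,y,z) := (1/4)([[z,y],x] + [[x,z],y] + [[y,x],z]). Then for all x, y ∈ P the map u ↦ l₃(x,y,u) is a derivation of the associative product: l₃(x, y, zw) = l₃(x,y,z) w + z l₃(x,y,w) for all z, w ∈ P. -/
/-- Let `(P, ⊣, ⊢, [−,−])` be a reduced Poisson dialgebra over a field
`K` of characteristic zero (i.e. `x ⊣ y = x ⊢ y`; write `xy := x ⊣ y`) and define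
`l₃(x,y,z) := (1/4)([[z,y],x] + [[x,z],y] + [[y,x],z])`. Then for all `x, y` the map
`u ↦ l₃(x,y,u)` is a derivation of the associative product:
`l₃(x, y, zw) = l₃(x,y,z) w + z l₃(x,y,w)`.
Here `l x y = x ⊣ y`, `r x y = x ⊢ y`, `b x y = [x,y]`. -/
theorem l3_is_derivation_of_reduced_product
    {K : Type*} [Field K] [CharZero K]
    {P : Type*} [AddCommGroup P] [Module K P]
    (l r : P →ₗ[K] P →ₗ[K] P) (b : P →ₗ[K] P →ₗ[K] P)
    (dax1 : ∀ x y z : P, l (l x y) z = l x (r y z))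
    (dax2 : ∀ x y z : P, l (l x y) z = l x (l y z))
    (dax3 : ∀ x y z : P, l (r x y) z = r x (l y z))
    (dax4 : ∀ x y z : P, r (l x y) z = r x (r y z))
    (dax5 : ∀ x y z : P, r (r x y) z = r x (r y z))
    (leib : ∀ x y z : P, b (b x y) z = b (b x z) y + b x (b y z))
    (c1 : ∀ x y z : P, b x (l y z) = r y (b x z) + l (b x y) z)
    (c1mixed : ∀ x y z : P, b x (r y z) = r y (b x z) + l (b x y) z)
    (c2 : ∀ x y z : P, b (l x y) z = l x (b y z) + l (b x z) y)
    (c3 : ∀ x y z : P, b (r x y) z = r x (b y z) + r (b x z) y)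
    (c4 : ∀ x y z : P, r (b x y) z = - r (b y x) z)
    (c5 : ∀ x y z : P, l x (b y z) = - l x (b z y))
    (hred : ∀ x y : P, l x y = r x y)
    (l₃ : P → P → P → P)
    (hl₃ : ∀ x y z : P,
      l₃ x y z = (4 : K)⁻¹ • (b (b z y) x + b (b x z) y + b (b y x) z)) :
    ∀ x y z w : P, l₃ x y (l z w) = l (l₃ x y z) w + l z (l₃ x y w) := by
  intro x y z w
  have c1' : ∀ a u v : P, b a (l u v) = l u (b a v) + l (b a u) v := by
    intro a u v; rw [c1, ← hred]
  have c2' : ∀ u v a : P, b (l u v) a = l u (b v a) + l (b u a) v := c2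
  have c4' : ∀ u v a : P, l (b u v) a = - l (b v u) a := by
    intro u v a; rw [hred, hred, c4]
  have key : b (b (l z w) y) x + b (b x (l z w)) y + b (b y x) (l z w)
      = l (b (b z y) x + b (b x z) y + b (b y x) z) w
        + l z (b (b w y) x + b (b x w) y + b (b y x) w) := by
    simp only [c1', c2', map_add, map_neg, LinearMap.add_apply, LinearMap.neg_apply,
      map_sub, LinearMap.sub_apply]
    rw [c4' x z, c5 (b z y) x w]
    abel
  rw [hl₃ x y (l z w), hl₃ x y z, hl₃ x y w, map_smul, LinearMap.smul_apply,
    map_smul, ← smul_add, key]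
end
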